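/- Let Y be a set with a distinguished element x ∈ Y, let α ≥ 1 be an integer, and let A be the subgroup of the free group F(Y) generated by the set (Y \ {x}) ∪ {x^{α}}. A reduced word v in the alphabet Y^{±1} represents an element of A if and only if every maximal subword of v consisting entirely of the letter x or entirely of the letter x^{-1} has length divisible by α. -/

import Mathlib

/-!
`A` is the image of the endomorphism of `F(Y)` sending `x ↦ x ^ α` and fixing the other
generators. On words this endomorphism replaces each letter `x^{±1}` by `α` copies of itself,
which keeps reduced words reduced; so the reduced words representing elements of `A` are
exactly these expansions, and a word is an expansion iff each of its maximal runs of `x` or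
of `x⁻¹` has length divisible by `α`.
-/

namespace List

variable {α : Type*} {n m k : ℕ} {a b : α} {l : List α}

def RunsDvd (n : ℕ) (a : α) (l : List α) : Prop :=
  ∀ l₁ l₂ k, l = l₁ ++ replicate k a ++ l₂ → l₁.getLast? ≠ some a → l₂.head? ≠ some a → n ∣ k

theorem exists_cons_eq_replicate_append (a : α) (l : List α) :
    ∃ m r, r.head? ≠ some a ∧ a :: l = replicate (m + 1) a ++ r := by
  induction l with
  | nil => exact ⟨0, [], by simp, rfl⟩
  | cons b l ih =>
    by_cases hb : b = a
    · obtain ⟨m, r, hr, h⟩ := ih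
      exact ⟨m + 1, r, hr, by rw [hb, h]; rfl⟩
    · exact ⟨0, b :: l, by simpa using hb, rfl⟩

@[elab_as_elim]
theorem induction_on_runs {motive : List α → Prop} (nil : motive [])
    (run : ∀ a m l, l.head? ≠ some a → motive l → motive (replicate (m + 1) a ++ l))
    (l : List α) : motive l := by
  induction h : l.length using Nat.strong_induction_on generalizing l with
  | _ N ih =>
    rcases l with _ | ⟨a, l⟩
    · exact nil
    · obtain ⟨m, r, hr, hl⟩ := exists_cons_eq_replicate_append a l
      rw [hl] at h ⊢
      exact run a m r hr (ih r.length (by simp at h; omega) r rfl)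

theorem eq_of_replicate_append_eq {l₁ l₂ : List α} (h : replicate k a ++ l₁ = replicate m a ++ l₂)
    (h₁ : l₁.head? ≠ some a) (h₂ : l₂.head? ≠ some a) : k = m := by
  induction k generalizing m with
  | zero =>
    cases m with
    | zero => rfl
    | succ m => simp [replicate_succ] at h; simp [h] at h₁
  | succ k ih =>
    cases m with
    | zero => simp [replicate_succ] at h; simp [← h] at h₂
    | succ m => simp_all [replicate_succ]

theorem runsDvd_nil : RunsDvd n a [] := by
  intro l₁ l₂ k h _ _
  simp_all [eq_comm (a := [])]

theorem runsDvd_cons_of_ne (hb : b ≠ a) : RunsDvd n a (b :: l) ↔ RunsDvd n a l := by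
  constructor
  · intro hR l₁ l₂ k h h₁ h₂
    refine hR (b :: l₁) l₂ k (by simp [h]) ?_ h₂
    cases l₁ <;> simp_all
  · intro hR l₁ l₂ k h h₁ h₂
    rcases l₁ with _ | ⟨c, l₁⟩
    · cases k <;> simp_all [replicate_succ]
    · refine hR l₁ l₂ k (by simp_all) ?_ h₂
      cases l₁ <;> simp_all

theorem runsDvd_replicate_append_of_ne (hb : b ≠ a) :
    RunsDvd n a (replicate m b ++ l) ↔ RunsDvd n a l := by
  induction m with
  | zero => rfl
  | succ m ih => rw [replicate_succ, cons_append, runsDvd_cons_of_ne hb, ih]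

theorem runsDvd_replicate_append (hm : m ≠ 0) (hl : l.head? ≠ some a) :
    RunsDvd n a (replicate m a ++ l) ↔ n ∣ m ∧ RunsDvd n a l := by
  constructor
  · intro hR
    refine ⟨hR [] l m (by simp) (by simp) hl, fun l₁ l₂ k h h₁ h₂ => ?_⟩
    rcases l₁ with _ | ⟨c, l₁⟩
    · cases k <;> simp_all [replicate_succ]
    · exact hR (replicate m a ++ c :: l₁) l₂ k (by simp [h])
        (by rwa [getLast?_append_of_ne_nil _ (cons_ne_nil _ _)]) h₂
  · rintro ⟨hnm, hR⟩ l₁ l₂ k h h₁ h₂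
    rw [append_assoc] at h
    rcases append_eq_append_iff.mp h with ⟨c, rfl, hc⟩ | ⟨c, hc, hl₂⟩
    · rcases eq_nil_or_concat c with rfl | ⟨c, d, rfl⟩
      · simp [getLast?_replicate, hm] at h₁
      · exact hR (c.concat d) l₂ k (by simp [hc]) (by simpa using h₁) h₂
    · rcases l₁ with _ | ⟨d, l₁⟩
      · rw [nil_append] at hc
        rwa [eq_of_replicate_append_eq (hl₂.trans (by rw [hc])) h₂ hl]
      · obtain ⟨-, hl₁, -⟩ := append_eq_replicate_iff.mp hc.symm
        rw [hl₁] at h₁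
        simp [getLast?_replicate] at h₁

end List

namespace FreeGroup

open List

theorem mk_replicate {Y : Type*} (m : ℕ) (a : Y × Bool) : mk (replicate m a) = mk [a] ^ m := by
  rw [pow_mk, flatten_replicate_singleton]

variable {Y : Type*} [DecidableEq Y] (x : Y) (n : ℕ)

def expandLetter (w : List (Y × Bool)) : List (Y × Bool) :=
  w.flatMap fun a => replicate (if a.1 = x then n else 1) a

def powGenerator : FreeGroup Y →* FreeGroup Y :=
  FreeGroup.lift fun y => if y = x then of y ^ n else of y

variable {x n}

theorem expandLetter_append (w₁ w₂ : List (Y × Bool)) :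
    expandLetter x n (w₁ ++ w₂) = expandLetter x n w₁ ++ expandLetter x n w₂ :=
  flatMap_append

theorem expandLetter_replicate (m : ℕ) (a : Y × Bool) :
    expandLetter x n (replicate m a) = replicate (m * if a.1 = x then n else 1) a := by
  simp [expandLetter, flatMap_replicate]

theorem head?_expandLetter (hn : n ≠ 0) (w : List (Y × Bool)) :
    (expandLetter x n w).head? = w.head? := by
  rcases w with _ | ⟨a, w⟩
  · rfl
  · have hk : (if a.1 = x then n else 1) ≠ 0 := by split_ifs <;> omega
    simp [expandLetter, head?_replicate, hk]

theorem IsReduced.expandLetter (hn : n ≠ 0) {w : List (Y × Bool)} (hw : IsReduced w) :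
    IsReduced (expandLetter x n w) := by
  have hk (a : Y × Bool) : (if a.1 = x then n else 1) ≠ 0 := by split_ifs <;> omega
  rw [IsReduced, FreeGroup.expandLetter, flatMap_def, isChain_flatten (by simp [hk]), isChain_map]
  refine ⟨?_, hw.imp fun a b hab => ?_⟩
  · simp only [mem_map]
    rintro _ ⟨a, -, rfl⟩
    exact isChain_replicate_of_rel _ fun _ => rfl
  · simpa [getLast?_replicate, head?_replicate, hk] using hab

theorem powGenerator_mk (w : List (Y × Bool)) :
    powGenerator x n (mk w) = mk (expandLetter x n w) := by
  induction w with
  | nil => simp [expandLetter, ← one_eq_mk]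
  | cons a w ih =>
    rw [← singleton_append, ← mul_mk, _root_.map_mul, ih, expandLetter_append, ← mul_mk]
    congr 1
    obtain ⟨y, b⟩ := a
    have hof : mk [(y, true)] = of y := rfl
    have hinv : mk [(y, false)] = (of y)⁻¹ := by rw [← hof, inv_mk]; rfl
    rw [expandLetter, flatMap_singleton, mk_replicate, powGenerator, lift_mk]
    rcases eq_or_ne y x with rfl | hy
    · cases b <;> simp [hof, hinv, inv_pow, -pow_mk]
    · cases b <;> simp [hof, hinv, hy]

theorem closure_eq_range_powGenerator :
    Subgroup.closure ((of '' {y | y ≠ x}) ∪ {of x ^ n}) = (powGenerator x n).range := by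
  rw [powGenerator, range_lift_eq_closure]
  congr 1
  ext g
  constructor
  · rintro (⟨y, hy, rfl⟩ | rfl)
    · exact ⟨y, if_neg hy⟩
    · exact ⟨x, if_pos rfl⟩
  · rintro ⟨y, rfl⟩
    by_cases hy : y = x
    · subst hy
      exact Or.inr (if_pos rfl)
    · exact Or.inl ⟨y, hy, (if_neg hy).symm⟩

theorem runsDvd_expandLetter (hn : n ≠ 0) (s : Bool) (w : List (Y × Bool)) :
    RunsDvd n (x, s) (expandLetter x n w) := by
  induction w using induction_on_runs with
  | nil => exact runsDvd_nil
  | run a m w hw ih =>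
    rw [expandLetter_append, expandLetter_replicate]
    by_cases ha : a = (x, s)
    · subst ha
      rw [if_pos rfl, runsDvd_replicate_append (by simp [hn]) (by rwa [head?_expandLetter hn])]
      exact ⟨dvd_mul_left n _, ih⟩
    · rwa [runsDvd_replicate_append_of_ne ha]

theorem exists_expandLetter_eq (v : List (Y × Bool))
    (hv : ∀ s, RunsDvd n (x, s) v) : ∃ w, expandLetter x n w = v := by
  induction v using induction_on_runs with
  | nil => exact ⟨[], rfl⟩
  | run a m v ha ih =>
    obtain ⟨y, t⟩ := a
    by_cases hy : y = x
    · subst hy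
      have hrun := (runsDvd_replicate_append m.succ_ne_zero ha).1 (hv t)
      have hv' (s : Bool) : RunsDvd n (y, s) v := by
        rcases eq_or_ne s t with rfl | hs
        · exact hrun.2
        · exact (runsDvd_replicate_append_of_ne (by simp [hs.symm])).1 (hv s)
      obtain ⟨w, rfl⟩ := ih hv'
      refine ⟨replicate ((m + 1) / n) (y, t) ++ w, ?_⟩
      rw [expandLetter_append, expandLetter_replicate, if_pos rfl, Nat.div_mul_cancel hrun.1]
    · have hv' (s : Bool) : RunsDvd n (x, s) v :=
        (runsDvd_replicate_append_of_ne (by simp [hy])).1 (hv s)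
      obtain ⟨w, rfl⟩ := ih hv'
      refine ⟨replicate (m + 1) (y, t) ++ w, ?_⟩
      rw [expandLetter_append, expandLetter_replicate, if_neg hy, mul_one]

theorem forall_runsDvd_iff_exists_expandLetter_eq (hn : n ≠ 0) (v : List (Y × Bool)) :
    (∀ s, RunsDvd n (x, s) v) ↔ ∃ w, expandLetter x n w = v :=
  ⟨exists_expandLetter_eq v, fun ⟨w, hw⟩ s => hw ▸ runsDvd_expandLetter hn s w⟩

theorem mk_mem_range_powGenerator_iff (hn : n ≠ 0) {v : List (Y × Bool)} (hv : IsReduced v) :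
    mk v ∈ (powGenerator x n).range ↔ ∃ w, expandLetter x n w = v := by
  constructor
  · rintro ⟨g, hg⟩
    refine ⟨g.toWord, ?_⟩
    rw [← mk_toWord (x := g), powGenerator_mk] at hg
    have h := congrArg toWord hg
    rwa [toWord_mk, toWord_mk, (isReduced_toWord.expandLetter hn).reduce_eq, hv.reduce_eq] at h
  · rintro ⟨w, rfl⟩
    exact ⟨mk w, powGenerator_mk w⟩

end FreeGroup

open FreeGroup in
/-- Let `Y` be a set with `x ∈ Y`, let `α ≥ 1` be an integer and let `A ≤ F(Y)` be the
subgroup generated by the generators other than `x` together with `x ^ α`.  A reduced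
word `v` in the alphabet `Y^{±1}` represents an element of `A` if and only if every
maximal subword of `v` consisting entirely of the letter `x` or entirely of the letter
`x⁻¹` has length divisible by `α`.  A maximal such subword is formalized as a block
`List.replicate k (x, s)` occurring in `v` that is not preceded nor followed by the
letter `(x, s)`. -/
theorem mem_power_subgroup_iff_blocks {Y : Type*} [DecidableEq Y] (x : Y)
    (α : ℤ) (hα : 1 ≤ α)
    (A : Subgroup (FreeGroup Y))
    (hA : A = Subgroup.closure
      ((FreeGroup.of '' {y : Y | y ≠ x}) ∪ {FreeGroup.of x ^ α}))
    (v : List (Y × Bool)) (hv : FreeGroup.reduce v = v) :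
    FreeGroup.mk v ∈ A ↔
      ∀ (v₁ v₂ v₃ : List (Y × Bool)) (s : Bool) (k : ℕ),
        v = v₁ ++ v₂ ++ v₃ → v₂ = List.replicate k (x, s) →
        v₁.getLast? ≠ some (x, s) → v₃.head? ≠ some (x, s) →
        α ∣ (k : ℤ) := by
  lift α to ℕ using (by omega) with n
  have hn : n ≠ 0 := by omega
  rw [hA, zpow_natCast, closure_eq_range_powGenerator,
    mk_mem_range_powGenerator_iff hn (IsReduced.of_reduce_eq hv),
    ← forall_runsDvd_iff_exists_expandLetter_eq hn]
  simp only [Int.natCast_dvd_natCast]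
  exact ⟨fun h v₁ _ v₃ s k hsplit hrun => h s v₁ v₃ k (hrun ▸ hsplit),
    fun h s v₁ v₃ k hsplit => h v₁ _ v₃ s k hsplit rfl⟩
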